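/- If r ≤ D(P‖P̄) (with P ≠ P̄ full-support distributions on a finite set), then min over distributions Q with D(Q‖P̄) ≤ r of D(Q‖P) equals sup_{0≤s≤1} (−s·r − φ(s|P‖P̄))/(1−s). -/

import Mathlib

/-!
With the tilted distributions `Q_s ∝ P̄^s P^(1-s)`, every probability vector `Q` satisfies
`s D(Q‖P̄) + (1-s) D(Q‖P) = D(Q‖Q_s) - φ(s)`. Nonnegativity of `D(Q‖Q_s)` gives weak duality,
with equality at `Q = Q_s`. Since `s ↦ D(Q_s‖P̄)` runs continuously from `D(P‖P̄)` to `0` on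
`[0, 1]`, some `Q_{s₀}` meets the constraint with equality, and there the bound is attained; the
endpoint `s₀ = 1` (only possible for `r = 0`) is reached as a limit `s → 1⁻`.
For `r < 0` both sides are `0` by Lean's conventions: the constraint set is empty, and the
objective, at least `-s r / (1 - s)`, is unbounded.
-/

noncomputable def phi {Y : Type*} [Fintype Y] (P Pb : Y → ℝ) (s : ℝ) : ℝ :=
  Real.log (∑ y, Pb y ^ s * P y ^ (1 - s))

noncomputable def Dkl {Y : Type*} [Fintype Y] (P Q : Y → ℝ) : ℝ :=
  ∑ y, P y * Real.log (P y / Q y)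

open Real Finset Set Filter Topology

lemma sub_le_mul_log_div {q m : ℝ} (hq : 0 ≤ q) (hm : 0 < m) : q - m ≤ q * log (q / m) := by
  rcases hq.eq_or_lt with rfl | hq
  · simp [hm.le]
  have h := one_sub_inv_le_log_of_pos (div_pos hq hm)
  rw [inv_div] at h
  calc q - m = q * (1 - m / q) := by field_simp
    _ ≤ q * log (q / m) := mul_le_mul_of_nonneg_left h hq.le

section Divergence

variable {Y : Type*} [Fintype Y]

theorem Dkl_nonneg {Q R : Y → ℝ} (hQ : ∀ y, 0 ≤ Q y) (hQ1 : ∑ y, Q y = 1)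
    (hR : ∀ y, 0 < R y) (hR1 : ∑ y, R y = 1) : 0 ≤ Dkl Q R :=
  calc (0 : ℝ) = ∑ y, (Q y - R y) := by rw [sum_sub_distrib, hQ1, hR1, sub_self]
    _ ≤ Dkl Q R := sum_le_sum fun y _ => sub_le_mul_log_div (hQ y) (hR y)

theorem Dkl_self (R : Y → ℝ) : Dkl R R = 0 :=
  sum_eq_zero fun y _ => by
    rcases eq_or_ne (R y) 0 with h | h
    · simp [h]
    · simp [div_self h]

theorem continuous_Dkl {Q : ℝ → Y → ℝ} {R : Y → ℝ} (hQ : ∀ y, Continuous (Q · y))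
    (hQpos : ∀ s y, 0 < Q s y) (hR : ∀ y, 0 < R y) : Continuous fun s => Dkl (Q s) R :=
  continuous_finsetSum _ fun y _ =>
    (hQ y).mul (((hQ y).div_const _).log fun s => (div_pos (hQpos s y) (hR y)).ne')

end Divergence

section Tilt

variable {Y : Type*} {P Pb : Y → ℝ}

lemma geomMix_pos (hP : ∀ y, 0 < P y) (hPb : ∀ y, 0 < Pb y) (s : ℝ) (y : Y) :
    0 < Pb y ^ s * P y ^ (1 - s) :=
  mul_pos (rpow_pos_of_pos (hPb y) s) (rpow_pos_of_pos (hP y) _)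

variable [Fintype Y]

noncomputable def tilt (P Pb : Y → ℝ) (s : ℝ) (y : Y) : ℝ :=
  Pb y ^ s * P y ^ (1 - s) / ∑ z, Pb z ^ s * P z ^ (1 - s)

lemma tilt_zero (hP1 : ∑ y, P y = 1) : tilt P Pb 0 = P := by
  funext y
  simp [tilt, hP1]

lemma tilt_one (hPb1 : ∑ y, Pb y = 1) : tilt P Pb 1 = Pb := by
  funext y
  simp [tilt, hPb1]

variable [Nonempty Y]

lemma sum_geomMix_pos (hP : ∀ y, 0 < P y) (hPb : ∀ y, 0 < Pb y) (s : ℝ) :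
    0 < ∑ y, Pb y ^ s * P y ^ (1 - s) :=
  sum_pos (fun y _ => geomMix_pos hP hPb s y) univ_nonempty

lemma tilt_pos (hP : ∀ y, 0 < P y) (hPb : ∀ y, 0 < Pb y) (s : ℝ) (y : Y) :
    0 < tilt P Pb s y :=
  div_pos (geomMix_pos hP hPb s y) (sum_geomMix_pos hP hPb s)

lemma sum_tilt (hP : ∀ y, 0 < P y) (hPb : ∀ y, 0 < Pb y) (s : ℝ) : ∑ y, tilt P Pb s y = 1 := by
  simp only [tilt, ← sum_div]
  exact div_self (sum_geomMix_pos hP hPb s).ne'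

lemma log_tilt (hP : ∀ y, 0 < P y) (hPb : ∀ y, 0 < Pb y) (s : ℝ) (y : Y) :
    log (tilt P Pb s y) = s * log (Pb y) + (1 - s) * log (P y) - phi P Pb s := by
  rw [tilt, phi, log_div (geomMix_pos hP hPb s y).ne' (sum_geomMix_pos hP hPb s).ne',
    log_mul (rpow_pos_of_pos (hPb y) s).ne' (rpow_pos_of_pos (hP y) _).ne',
    log_rpow (hPb y), log_rpow (hP y)]

lemma continuous_tilt (hP : ∀ y, 0 < P y) (hPb : ∀ y, 0 < Pb y) (y : Y) :
    Continuous (tilt P Pb · y) := by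
  have hmix : ∀ z, Continuous fun s : ℝ => Pb z ^ s * P z ^ (1 - s) := fun z =>
    (continuous_const.rpow continuous_id fun _ => .inl (hPb z).ne').mul
      (continuous_const.rpow (continuous_const.sub continuous_id) fun _ => .inl (hP z).ne')
  exact (hmix y).div (continuous_finsetSum _ fun z _ => hmix z)
    fun s => (sum_geomMix_pos hP hPb s).ne'

lemma mix_Dkl_eq (hP : ∀ y, 0 < P y) (hPb : ∀ y, 0 < Pb y) {Q : Y → ℝ}
    (hQ1 : ∑ y, Q y = 1) (s : ℝ) :
    s * Dkl Q Pb + (1 - s) * Dkl Q P = Dkl Q (tilt P Pb s) - phi P Pb s := by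
  have hterm : ∀ y, s * (Q y * log (Q y / Pb y)) + (1 - s) * (Q y * log (Q y / P y)) =
      Q y * log (Q y / tilt P Pb s y) - phi P Pb s * Q y := by
    intro y
    rcases eq_or_ne (Q y) 0 with h | h
    · simp [h]
    rw [log_div h (hPb y).ne', log_div h (hP y).ne', log_div h (tilt_pos hP hPb s y).ne',
      log_tilt hP hPb]
    ring
  rw [Dkl, Dkl, Dkl, mul_sum, mul_sum, ← sum_add_distrib, sum_congr rfl fun y _ => hterm y,
    sum_sub_distrib, ← mul_sum, hQ1, mul_one]

lemma neg_phi_le_mix_Dkl (hP : ∀ y, 0 < P y) (hPb : ∀ y, 0 < Pb y) {Q : Y → ℝ}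
    (hQ : ∀ y, 0 ≤ Q y) (hQ1 : ∑ y, Q y = 1) (s : ℝ) :
    -phi P Pb s ≤ s * Dkl Q Pb + (1 - s) * Dkl Q P := by
  rw [mix_Dkl_eq hP hPb hQ1]
  linarith [Dkl_nonneg hQ hQ1 (tilt_pos hP hPb s) (sum_tilt hP hPb s)]

lemma neg_phi_eq_mix_Dkl_tilt (hP : ∀ y, 0 < P y) (hPb : ∀ y, 0 < Pb y) (s : ℝ) :
    -phi P Pb s = s * Dkl (tilt P Pb s) Pb + (1 - s) * Dkl (tilt P Pb s) P := by
  rw [mix_Dkl_eq hP hPb (sum_tilt hP hPb s), Dkl_self, zero_sub]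

lemma phi_nonpos (hP : ∀ y, 0 < P y) (hPb : ∀ y, 0 < Pb y) (hP1 : ∑ y, P y = 1)
    (hPb1 : ∑ y, Pb y = 1) {s : ℝ} (hs : s ∈ Icc (0 : ℝ) 1) : phi P Pb s ≤ 0 := by
  have hQ : ∀ y, 0 ≤ tilt P Pb s y := fun y => (tilt_pos hP hPb s y).le
  nlinarith [neg_phi_eq_mix_Dkl_tilt hP hPb s, Dkl_nonneg hQ (sum_tilt hP hPb s) hPb hPb1,
    Dkl_nonneg hQ (sum_tilt hP hPb s) hP hP1, hs.1, hs.2]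

end Tilt

section Duality

variable {Y : Type*} [Fintype Y] {P Pb : Y → ℝ} {r : ℝ}

/-- At `s = 1` this is the junk value `x / 0 = 0`. -/
noncomputable def hoeffdingObj (P Pb : Y → ℝ) (r s : ℝ) : ℝ :=
  (-s * r - phi P Pb s) / (1 - s)

variable [Nonempty Y]

lemma exists_Dkl_tilt_eq (hP : ∀ y, 0 < P y) (hPb : ∀ y, 0 < Pb y) (hP1 : ∑ y, P y = 1)
    (hPb1 : ∑ y, Pb y = 1) (hr0 : 0 ≤ r) (hr : r ≤ Dkl P Pb) :
    ∃ s ∈ Icc (0 : ℝ) 1, Dkl (tilt P Pb s) Pb = r := by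
  refine intermediate_value_Icc' zero_le_one
    (continuous_Dkl (continuous_tilt hP hPb) (tilt_pos hP hPb) hPb).continuousOn ?_
  rw [tilt_zero hP1, tilt_one hPb1, Dkl_self]
  exact ⟨hr0, hr⟩

lemma hoeffdingObj_le_Dkl (hP : ∀ y, 0 < P y) (hPb : ∀ y, 0 < Pb y) (hP1 : ∑ y, P y = 1)
    {Q : Y → ℝ} (hQ : ∀ y, 0 ≤ Q y) (hQ1 : ∑ y, Q y = 1) (hQr : Dkl Q Pb ≤ r) {s : ℝ}
    (hs : s ∈ Icc (0 : ℝ) 1) : hoeffdingObj P Pb r s ≤ Dkl Q P := by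
  rcases hs.2.lt_or_eq with hs1 | rfl
  · rw [hoeffdingObj, div_le_iff₀ (sub_pos.2 hs1)]
    nlinarith [neg_phi_le_mix_Dkl hP hPb hQ hQ1 s, mul_le_mul_of_nonneg_left hQr hs.1]
  · simpa [hoeffdingObj] using Dkl_nonneg hQ hQ1 hP hP1

lemma Dkl_tilt_le_hoeffdingObj (hP : ∀ y, 0 < P y) (hPb : ∀ y, 0 < Pb y) {s : ℝ}
    (hs0 : 0 ≤ s) (hs1 : s < 1) (hr : r ≤ Dkl (tilt P Pb s) Pb) :
    Dkl (tilt P Pb s) P ≤ hoeffdingObj P Pb r s := by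
  rw [hoeffdingObj, le_div_iff₀ (sub_pos.2 hs1)]
  nlinarith [neg_phi_eq_mix_Dkl_tilt hP hPb s, mul_le_mul_of_nonneg_left hr hs0]

lemma not_bddAbove_hoeffdingObj (hP : ∀ y, 0 < P y) (hPb : ∀ y, 0 < Pb y)
    (hP1 : ∑ y, P y = 1) (hPb1 : ∑ y, Pb y = 1) (hr : r < 0) :
    ¬BddAbove (range fun s : Icc (0 : ℝ) 1 => hoeffdingObj P Pb r s) := by
  rw [not_bddAbove_iff]
  intro M
  set t := (|M| + 1) / -r with ht
  have ht0 : 0 ≤ t := div_nonneg (by positivity) (by linarith)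
  have hs : t / (1 + t) ∈ Icc (0 : ℝ) 1 :=
    ⟨by positivity, (div_le_one (by linarith)).2 (by linarith)⟩
  refine ⟨_, ⟨⟨_, hs⟩, rfl⟩, ?_⟩
  have h1s : 1 - t / (1 + t) = 1 / (1 + t) := by field_simp; ring
  calc M < |M| + 1 := by linarith [le_abs_self M]
    _ = t * -r := by rw [ht, div_mul_cancel₀ _ (by linarith)]
    _ ≤ hoeffdingObj P Pb r (t / (1 + t)) := by
      rw [hoeffdingObj, le_div_iff₀ (by rw [h1s]; positivity), h1s]
      have hmul : t * -r * (1 / (1 + t)) = -(t / (1 + t)) * r := by ring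
      linarith [phi_nonpos hP hPb hP1 hPb1 hs]

lemma Dkl_tilt_le_iSup_hoeffdingObj (hP : ∀ y, 0 < P y) (hPb : ∀ y, 0 < Pb y)
    (hPb1 : ∑ y, Pb y = 1) (hr : 0 ≤ r)
    (hbdd : BddAbove (range fun s : Icc (0 : ℝ) 1 => hoeffdingObj P Pb r s)) {s₀ : ℝ}
    (hs₀ : s₀ ∈ Icc (0 : ℝ) 1) (hrs₀ : r ≤ Dkl (tilt P Pb s₀) Pb) :
    Dkl (tilt P Pb s₀) P ≤ ⨆ s : Icc (0 : ℝ) 1, hoeffdingObj P Pb r s := by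
  rcases hs₀.2.lt_or_eq with hs₀1 | rfl
  · exact (Dkl_tilt_le_hoeffdingObj hP hPb hs₀.1 hs₀1 hrs₀).trans (le_ciSup hbdd ⟨s₀, hs₀⟩)
  have hr0 : r = 0 := by
    rw [tilt_one hPb1, Dkl_self] at hrs₀
    exact le_antisymm hrs₀ hr
  have hcont : Tendsto (fun s => Dkl (tilt P Pb s) P) (𝓝[<] 1) (𝓝 (Dkl (tilt P Pb 1) P)) :=
    ((continuous_Dkl (continuous_tilt hP hPb) (tilt_pos hP hPb) hP).tendsto 1).mono_left
      nhdsWithin_le_nhds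
  refine le_of_tendsto hcont ?_
  filter_upwards [Ioo_mem_nhdsLT zero_lt_one] with s hs
  have hrs : r ≤ Dkl (tilt P Pb s) Pb :=
    hr0 ▸ Dkl_nonneg (fun y => (tilt_pos hP hPb s y).le) (sum_tilt hP hPb s) hPb hPb1
  exact (Dkl_tilt_le_hoeffdingObj hP hPb hs.1.le hs.2 hrs).trans
    (le_ciSup hbdd ⟨s, hs.1.le, hs.2.le⟩)

end Duality

theorem stmt18_general {Y : Type*} [Fintype Y] (P Pb : Y → ℝ)
    (hP : ∀ y, 0 < P y) (hPb : ∀ y, 0 < Pb y)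
    (hP1 : ∑ y, P y = 1) (hPb1 : ∑ y, Pb y = 1)
    (r : ℝ) (hr : r ≤ Dkl P Pb) :
    sInf {d : ℝ | ∃ Q : Y → ℝ, (∀ y, 0 ≤ Q y) ∧ (∑ y, Q y) = 1 ∧
        Dkl Q Pb ≤ r ∧ d = Dkl Q P} =
      ⨆ s : Set.Icc (0 : ℝ) 1, (-(s : ℝ) * r - phi P Pb (s : ℝ)) / (1 - (s : ℝ)) := by
  have : Nonempty Y := univ_nonempty_iff.1 (nonempty_of_sum_ne_zero (hP1 ▸ one_ne_zero))
  set S := {d : ℝ | ∃ Q : Y → ℝ, (∀ y, 0 ≤ Q y) ∧ (∑ y, Q y) = 1 ∧ Dkl Q Pb ≤ r ∧ d = Dkl Q P}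
  change sInf S = ⨆ s : Icc (0 : ℝ) 1, hoeffdingObj P Pb r s
  rcases lt_or_ge r 0 with hr0 | hr0
  · have hS : S = ∅ := eq_empty_of_forall_notMem fun _ ⟨Q, hQ, hQ1, hQr, _⟩ =>
      (Dkl_nonneg hQ hQ1 hPb hPb1).not_gt (hQr.trans_lt hr0)
    rw [hS, Real.sInf_empty, Real.iSup_of_not_bddAbove
      (not_bddAbove_hoeffdingObj hP hPb hP1 hPb1 hr0)]
  obtain ⟨s₀, hs₀, hrs₀⟩ := exists_Dkl_tilt_eq hP hPb hP1 hPb1 hr0 hr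
  have hweak : ∀ s : Icc (0 : ℝ) 1, ∀ d ∈ S, hoeffdingObj P Pb r s ≤ d := by
    rintro s _ ⟨Q, hQ, hQ1, hQr, rfl⟩
    exact hoeffdingObj_le_Dkl hP hPb hP1 hQ hQ1 hQr s.2
  have hmem : Dkl (tilt P Pb s₀) P ∈ S :=
    ⟨_, fun y => (tilt_pos hP hPb s₀ y).le, sum_tilt hP hPb s₀, hrs₀.le, rfl⟩
  have hbdd : BddBelow S := ⟨0, by
    rintro _ ⟨Q, hQ, hQ1, -, rfl⟩
    exact Dkl_nonneg hQ hQ1 hP hP1⟩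
  refine le_antisymm ?_ (ciSup_le fun s => le_csInf ⟨_, hmem⟩ (hweak s))
  exact (csInf_le hbdd hmem).trans (Dkl_tilt_le_iSup_hoeffdingObj hP hPb hPb1 hr0
    ⟨_, forall_mem_range.2 fun s => hweak s _ hmem⟩ hs₀ hrs₀.ge)

/-- Variational/Legendre-dual characterization of the Hoeffding exponent. -/
theorem stmt18 {Y : Type*} [Fintype Y] (P Pb : Y → ℝ)
    (hP : ∀ y, 0 < P y) (hPb : ∀ y, 0 < Pb y)
    (hP1 : ∑ y, P y = 1) (hPb1 : ∑ y, Pb y = 1) (hne : P ≠ Pb)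
    (r : ℝ) (hr : r ≤ Dkl P Pb) :
    sInf {d : ℝ | ∃ Q : Y → ℝ, (∀ y, 0 ≤ Q y) ∧ (∑ y, Q y) = 1 ∧
        Dkl Q Pb ≤ r ∧ d = Dkl Q P} =
      ⨆ s : Set.Icc (0 : ℝ) 1, (-(s : ℝ) * r - phi P Pb (s : ℝ)) / (1 - (s : ℝ)) :=
  stmt18_general P Pb hP hPb hP1 hPb1 r hr
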